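/- arXiv:1904.02738 — 3 statements merged into one kernel-verified Lean document; each statement's English description precedes it below -/
import Mathlib

section
/- Let $s \in (0,1)$, $n > 2s$, and let $u : \mathbb{R}^n \to \mathbb{R}$ be a measurable function whose positive part $u^+$ and negative part $u^-$ are both not almost everywhere zero and have finite Gagliardo seminorm. Then the fractional scalar product $(u^+, u^-)_s := \frac{C_{n,s}}{2}\int_{\mathbb{R}^{2n}} \frac{(u^+(x)-u^+(y))(u^-(x)-u^-(y))}{|x-y|^{n+2s}}\,dx\,dy$ is strictly negative. -/
open MeasureTheory

/-- The fractional (Gagliardo) scalar product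
`(f,g)_s = (C/2) ∫∫ (f(x)-f(y))(g(x)-g(y)) / |x-y|^{n+2s} dx dy`. -/
noncomputable def gagliardoProd (n : ℕ) (s C : ℝ)
    (f g : EuclideanSpace ℝ (Fin n) → ℝ) : ℝ :=
  (C / 2) * ∫ p : EuclideanSpace ℝ (Fin n) × EuclideanSpace ℝ (Fin n),
    (f p.1 - f p.2) * (g p.1 - g p.2) / dist p.1 p.2 ^ ((n : ℝ) + 2 * s)

private lemma aux_div_le {a b d : ℝ} (h : a ≤ b) (hd : 0 ≤ d) : a / d ≤ b / d := by
  gcongr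

theorem stmt_3 (n : ℕ) (s C : ℝ) (hs0 : 0 < s) (hs1 : s < 1) (hn : 2 * s < n)
    (hC : 0 < C) (u : EuclideanSpace ℝ (Fin n) → ℝ) (hmeas : Measurable u)
    -- the positive and negative parts are not a.e. zero
    (hpos : ¬ ((fun x => max (u x) 0) =ᵐ[volume] (0 : EuclideanSpace ℝ (Fin n) → ℝ)))
    (hneg : ¬ ((fun x => max (-u x) 0) =ᵐ[volume] (0 : EuclideanSpace ℝ (Fin n) → ℝ)))
    -- the positive and negative parts have finite Gagliardo seminorm
    (hfinpos : (∫⁻ p : EuclideanSpace ℝ (Fin n) × EuclideanSpace ℝ (Fin n),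
      ENNReal.ofReal ((max (u p.1) 0 - max (u p.2) 0) ^ 2 / dist p.1 p.2 ^ ((n : ℝ) + 2 * s))) < ⊤)
    (hfinneg : (∫⁻ p : EuclideanSpace ℝ (Fin n) × EuclideanSpace ℝ (Fin n),
      ENNReal.ofReal ((max (-u p.1) 0 - max (-u p.2) 0) ^ 2 / dist p.1 p.2 ^ ((n : ℝ) + 2 * s))) < ⊤) :
    gagliardoProd n s C (fun x => max (u x) 0) (fun x => max (-u x) 0) < 0 := by
  classical
  set α : ℝ := (n : ℝ) + 2 * s with hα
  set f : EuclideanSpace ℝ (Fin n) → ℝ := fun x => max (u x) 0 with hf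
  set g : EuclideanSpace ℝ (Fin n) → ℝ := fun x => max (-u x) 0 with hg
  have hf_nonneg : ∀ x, 0 ≤ f x := fun x => le_max_right _ _
  have hg_nonneg : ∀ x, 0 ≤ g x := fun x => le_max_right _ _
  have hf_meas : Measurable f := by rw [hf]; exact hmeas.max measurable_const
  have hg_meas : Measurable g := by rw [hg]; exact hmeas.neg.max measurable_const
  have hmix : ∀ x, f x * g x = 0 := by
    intro x
    rcases le_total (u x) 0 with h | h
    · rw [hf]; simp only [max_eq_right h, zero_mul]
    · rw [hg]; simp only [max_eq_right (neg_nonpos.2 h), mul_zero]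
  -- the integrand
  set F : (EuclideanSpace ℝ (Fin n)) × (EuclideanSpace ℝ (Fin n)) → ℝ := fun p => (f p.1 - f p.2) * (g p.1 - g p.2) / dist p.1 p.2 ^ α with hF
  have hα_nonneg : (0:ℝ) ≤ α := by rw [hα]; positivity
  have hd_meas : Measurable (fun p : (EuclideanSpace ℝ (Fin n)) × (EuclideanSpace ℝ (Fin n)) => dist p.1 p.2 ^ α) :=
    ((Real.continuous_rpow_const hα_nonneg).comp (continuous_fst.dist continuous_snd)).measurable
  have hF_meas : Measurable F :=
    (((hf_meas.comp measurable_fst).sub (hf_meas.comp measurable_snd)).mul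
      ((hg_meas.comp measurable_fst).sub (hg_meas.comp measurable_snd))).div hd_meas
  have hd_nonneg : ∀ p : (EuclideanSpace ℝ (Fin n)) × (EuclideanSpace ℝ (Fin n)), (0:ℝ) ≤ dist p.1 p.2 ^ α :=
    fun p => Real.rpow_nonneg dist_nonneg _
  have hnum : ∀ x y : EuclideanSpace ℝ (Fin n), (f x - f y) * (g x - g y) = -(f x * g y + f y * g x) := by
    intro x y
    linear_combination hmix x + hmix y
  have hF_nonpos : ∀ p, F p ≤ 0 := by
    intro p
    rw [hF]
    simp only
    rw [hnum]
    apply div_nonpos_of_nonpos_of_nonneg _ (hd_nonneg p)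
    have : 0 ≤ f p.1 * g p.2 + f p.2 * g p.1 := by positivity
    linarith
  -- dominating function
  set H : (EuclideanSpace ℝ (Fin n)) × (EuclideanSpace ℝ (Fin n)) → ℝ := fun p => (f p.1 - f p.2) ^ 2 / dist p.1 p.2 ^ α
      + (g p.1 - g p.2) ^ 2 / dist p.1 p.2 ^ α with hH
  have hH1_meas : Measurable (fun p : (EuclideanSpace ℝ (Fin n)) × (EuclideanSpace ℝ (Fin n)) => (f p.1 - f p.2) ^ 2 / dist p.1 p.2 ^ α) :=
    (((hf_meas.comp measurable_fst).sub (hf_meas.comp measurable_snd)).pow_const 2).div hd_meas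
  have hH2_meas : Measurable (fun p : (EuclideanSpace ℝ (Fin n)) × (EuclideanSpace ℝ (Fin n)) => (g p.1 - g p.2) ^ 2 / dist p.1 p.2 ^ α) :=
    (((hg_meas.comp measurable_fst).sub (hg_meas.comp measurable_snd)).pow_const 2).div hd_meas
  have hH1_nonneg : ∀ p : (EuclideanSpace ℝ (Fin n)) × (EuclideanSpace ℝ (Fin n)), 0 ≤ (f p.1 - f p.2) ^ 2 / dist p.1 p.2 ^ α :=
    fun p => div_nonneg (sq_nonneg _) (hd_nonneg p)
  have hH2_nonneg : ∀ p : (EuclideanSpace ℝ (Fin n)) × (EuclideanSpace ℝ (Fin n)), 0 ≤ (g p.1 - g p.2) ^ 2 / dist p.1 p.2 ^ α :=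
    fun p => div_nonneg (sq_nonneg _) (hd_nonneg p)
  have hH1_int : Integrable (fun p : (EuclideanSpace ℝ (Fin n)) × (EuclideanSpace ℝ (Fin n)) => (f p.1 - f p.2) ^ 2 / dist p.1 p.2 ^ α) := by
    refine ⟨hH1_meas.aestronglyMeasurable, ?_⟩
    rw [hasFiniteIntegral_iff_ofReal (Filter.Eventually.of_forall hH1_nonneg)]
    exact hfinpos
  have hH2_int : Integrable (fun p : (EuclideanSpace ℝ (Fin n)) × (EuclideanSpace ℝ (Fin n)) => (g p.1 - g p.2) ^ 2 / dist p.1 p.2 ^ α) := by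
    refine ⟨hH2_meas.aestronglyMeasurable, ?_⟩
    rw [hasFiniteIntegral_iff_ofReal (Filter.Eventually.of_forall hH2_nonneg)]
    exact hfinneg
  have hH_int : Integrable H := hH1_int.add hH2_int
  have hbound : ∀ p : (EuclideanSpace ℝ (Fin n)) × (EuclideanSpace ℝ (Fin n)), ‖F p‖ ≤ H p := by
    intro p
    rw [Real.norm_eq_abs, hF, hH]
    simp only
    rw [abs_div, abs_of_nonneg (hd_nonneg p), ← add_div]
    refine aux_div_le ?_ (hd_nonneg p)
    have := abs_mul (f p.1 - f p.2) (g p.1 - g p.2)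
    nlinarith [sq_nonneg (|f p.1 - f p.2| - |g p.1 - g p.2|), abs_nonneg (f p.1 - f p.2),
      abs_nonneg (g p.1 - g p.2), sq_abs (f p.1 - f p.2), sq_abs (g p.1 - g p.2)]
  have hF_int : Integrable F :=
    Integrable.mono' hH_int hF_meas.aestronglyMeasurable (Filter.Eventually.of_forall hbound)
  -- positivity of the measure of the support of -F
  have hA : 0 < volume {x : EuclideanSpace ℝ (Fin n) | 0 < u x} := by
    rw [pos_iff_ne_zero]
    intro h0
    apply hpos
    rw [Filter.eventuallyEq_iff_exists_mem]
    refine ⟨{x | ¬ 0 < u x}, ?_, ?_⟩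
    · rw [mem_ae_iff]
      convert h0 using 2
      ext x; simp
    · intro x hx
      simp only [Set.mem_setOf_eq, not_lt] at hx
      show f x = 0
      rw [hf]
      exact max_eq_right hx
  have hB : 0 < volume {x : EuclideanSpace ℝ (Fin n) | u x < 0} := by
    rw [pos_iff_ne_zero]
    intro h0
    apply hneg
    rw [Filter.eventuallyEq_iff_exists_mem]
    refine ⟨{x | ¬ u x < 0}, ?_, ?_⟩
    · rw [mem_ae_iff]
      convert h0 using 2
      ext x; simp
    · intro x hx
      simp only [Set.mem_setOf_eq, not_lt] at hx
      show g x = 0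
      rw [hg]
      exact max_eq_right (neg_nonpos.2 hx)
  have hAB : 0 < volume ({x : EuclideanSpace ℝ (Fin n) | 0 < u x} ×ˢ {x : EuclideanSpace ℝ (Fin n) | u x < 0}) := by
    rw [MeasureTheory.Measure.volume_eq_prod, Measure.prod_prod]
    exact ENNReal.mul_pos hA.ne' hB.ne'
  have hsub : {x : EuclideanSpace ℝ (Fin n) | 0 < u x} ×ˢ {x : EuclideanSpace ℝ (Fin n) | u x < 0} ⊆ Function.support (fun p => -F p) := by
    rintro ⟨x, y⟩ ⟨hx, hy⟩
    simp only [Set.mem_setOf_eq] at hx hy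
    have hne : x ≠ y := fun h => absurd (h ▸ hx) (asymm hy)
    have hdpos : (0:ℝ) < dist x y ^ α := Real.rpow_pos_of_pos (dist_pos.2 hne) _
    have hfx : 0 < f x := lt_max_of_lt_left hx
    have hgy : 0 < g y := lt_max_of_lt_left (neg_pos.2 hy)
    have : 0 < -F (x, y) := by
      rw [hF]
      simp only
      rw [hnum, neg_div, neg_neg]
      apply div_pos _ hdpos
      have : 0 ≤ f y * g x := mul_nonneg (hf_nonneg y) (hg_nonneg x)
      nlinarith
    exact Function.mem_support.2 this.ne'
  have hsupp : 0 < volume (Function.support fun p : (EuclideanSpace ℝ (Fin n)) × (EuclideanSpace ℝ (Fin n)) => -F p) :=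
    lt_of_lt_of_le hAB (measure_mono hsub)
  have hpos_int : 0 < ∫ p : (EuclideanSpace ℝ (Fin n)) × (EuclideanSpace ℝ (Fin n)), -F p := by
    rw [integral_pos_iff_support_of_nonneg_ae
      (Filter.Eventually.of_forall fun p => neg_nonneg.2 (hF_nonpos p)) hF_int.neg]
    exact hsupp
  rw [integral_neg] at hpos_int
  have hIF : (∫ p : (EuclideanSpace ℝ (Fin n)) × (EuclideanSpace ℝ (Fin n)), F p) < 0 := by linarith
  have : gagliardoProd n s C f g = (C / 2) * ∫ p : (EuclideanSpace ℝ (Fin n)) × (EuclideanSpace ℝ (Fin n)), F p := rfl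
  rw [this]
  exact mul_neg_of_pos_of_neg (by positivity) hIF
end

section
/- Let $q > 2$ and let $a, b, c, d, e > 0$ with $b = a - e$ and $d = c - e$. Suppose positive reals $\alpha, \beta$ satisfy the system $\alpha^{q-2} a - \frac{\beta}{\alpha} e = b$ and $\beta^{q-2} c - \frac{\alpha}{\beta} e = d$. Then $(\alpha,\beta) = (1,1)$ is the unique positive solution of this system. -/
private lemma aux_lo (q a e x y : ℝ) (hq : 2 < q) (ha : 0 < a) (he : 0 < e)
    (hx : 0 < x) (hxy : x ≤ y)
    (h : x ^ (q - 2) * a - (y / x) * e = a - e) : 1 ≤ x := by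
  by_contra hlt
  push_neg at hlt
  have h1 : x ^ (q - 2) < 1 := Real.rpow_lt_one hx.le hlt (by linarith)
  have h2 : (1 : ℝ) ≤ y / x := (one_le_div hx).2 hxy
  nlinarith [mul_le_mul_of_nonneg_left h2 he.le]

private lemma aux_hi (q c e x y : ℝ) (hq : 2 < q) (hc : 0 < c) (he : 0 < e)
    (hx : 0 < x) (hy : 0 < y) (hxy : x ≤ y)
    (h : y ^ (q - 2) * c - (x / y) * e = c - e) : y ≤ 1 := by
  by_contra hlt
  push_neg at hlt
  have h1 : 1 < y ^ (q - 2) := Real.one_lt_rpow_iff_of_pos hy |>.2 (Or.inl ⟨hlt, by linarith⟩)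
  have h2 : x / y ≤ 1 := (div_le_one hy).2 hxy
  nlinarith [mul_le_mul_of_nonneg_right h2 he.le]

theorem stmt_5 (q a b c d e α β : ℝ) (hq : 2 < q)
    (ha : 0 < a) (hb : 0 < b) (hc : 0 < c) (hd : 0 < d) (he : 0 < e)
    (hbe : b = a - e) (hde : d = c - e)
    (hα : 0 < α) (hβ : 0 < β)
    (h1 : α ^ (q - 2) * a - (β / α) * e = b)
    (h2 : β ^ (q - 2) * c - (α / β) * e = d) :
    α = 1 ∧ β = 1 := by
  subst hbe hde
  rcases le_total α β with hab | hab
  · have l1 := aux_lo q a e α β hq ha he hα hab h1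
    have l2 := aux_hi q c e α β hq hc he hα hβ hab h2
    constructor <;> linarith
  · have l1 := aux_lo q c e β α hq hc he hβ hab h2
    have l2 := aux_hi q a e β α hq ha he hβ hα hab h1
    constructor <;> linarith
end

section
/- Let $q > 2$, let $A, B, E > 0$ with $E < \min(A, B)$, and suppose $a := A - E > 0$, $b := B - E > 0$. Consider the system in unknowns $\alpha, \beta > 0$: $\alpha^{q-2} A = a + \frac{\beta}{\alpha} E$ and $\beta^{q-2} B = b + \frac{\alpha}{\beta} E$. Then any solution with $\alpha, \beta > 0$ satisfies: $\alpha$ and $\beta$ are bounded above and bounded away from $0$ by constants depending only on $q, A, B, E, a, b$ (in particular one cannot have $\alpha \to \infty$, $\alpha \to 0^+$, $\beta \to \infty$, or $\beta \to 0^+$ along a family with these coefficients bounded above and away from zero). -/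
private lemma aux_low (q A E a x y : ℝ) (hq2 : 0 < q - 2) (hA : 0 < A)
    (hE : 0 < E) (hapos : 0 < a) (hx : 0 < x) (hy : 0 < y)
    (h : y ^ (q - 2) * A = a + (x / y) * E) : (a / A) ^ (1 / (q - 2)) ≤ y := by
  have hpos : 0 < (x / y) * E := mul_pos (div_pos hx hy) hE
  have h1 : a / A ≤ y ^ (q - 2) := (div_le_iff₀ hA).mpr (by linarith)
  calc (a / A) ^ (1 / (q - 2)) ≤ (y ^ (q - 2)) ^ (1 / (q - 2)) :=
        Real.rpow_le_rpow (by positivity) h1 (by positivity)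
    _ = y := by
        rw [← Real.rpow_mul hy.le, mul_one_div, div_self hq2.ne', Real.rpow_one]

private lemma aux_up (q B E b x y : ℝ) (hq2 : 0 < q - 2) (hB : 0 < B)
    (hE : 0 < E) (hbB : b = B - E) (hx : 0 < x) (hy : 0 < y) (hxy : x ≤ y)
    (h : y ^ (q - 2) * B = b + (x / y) * E) : y ≤ 1 := by
  have hdiv : x / y ≤ 1 := (div_le_one hy).mpr hxy
  have h2 : y ^ (q - 2) ≤ 1 := by
    have : y ^ (q - 2) * B ≤ B := by nlinarith
    nlinarith
  by_contra hc
  push_neg at hc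
  have : 1 < y ^ (q - 2) :=
    (Real.one_lt_rpow_iff_of_pos hy).mpr (Or.inl ⟨hc, hq2⟩)
  linarith

theorem stmt_19 (q A B E a b : ℝ) (hq : 2 < q)
    (hA : 0 < A) (hB : 0 < B) (hE : 0 < E) (hEA : E < A) (hEB : E < B)
    (ha : a = A - E) (hb : b = B - E) :
    ∃ m M : ℝ, 0 < m ∧
      ∀ α β : ℝ, 0 < α → 0 < β →
        α ^ (q - 2) * A = a + (β / α) * E →
        β ^ (q - 2) * B = b + (α / β) * E →
        m ≤ α ∧ α ≤ M ∧ m ≤ β ∧ β ≤ M := by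
  have hq2 : 0 < q - 2 := by linarith
  have hapos : 0 < a := by rw [ha]; linarith
  have hbpos : 0 < b := by rw [hb]; linarith
  refine ⟨min ((a / A) ^ (1 / (q - 2))) ((b / B) ^ (1 / (q - 2))), 1, ?_, ?_⟩
  · exact lt_min (Real.rpow_pos_of_pos (div_pos hapos hA) _)
      (Real.rpow_pos_of_pos (div_pos hbpos hB) _)
  · intro α β hα hβ h1 h2
    have l1 : (a / A) ^ (1 / (q - 2)) ≤ α := aux_low q A E a β α hq2 hA hE hapos hβ hα h1
    have l2 : (b / B) ^ (1 / (q - 2)) ≤ β := aux_low q B E b α β hq2 hB hE hbpos hα hβ h2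
    have hup : α ≤ 1 ∧ β ≤ 1 := by
      rcases le_total α β with h | h
      · have hβ1 : β ≤ 1 := aux_up q B E b α β hq2 hB hE hb hα hβ h h2
        exact ⟨le_trans h hβ1, hβ1⟩
      · have hα1 : α ≤ 1 := aux_up q A E a β α hq2 hA hE ha hβ hα h h1
        exact ⟨hα1, le_trans h hα1⟩
    exact ⟨le_trans (min_le_left _ _) l1, hup.1, le_trans (min_le_right _ _) l2, hup.2⟩
end
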